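/- arXiv:0707.2221 — 3 statements merged into one kernel-verified Lean document; each statement's English description precedes it below -/
import Mathlib

section
/- Let ψ : ℝ² → ℝ be C³ and satisfy Δψ = -γ(ψ) for a C¹ function γ, and let R = ½|∇ψ|² + g·y - ½Q + Γ̂(ψ) with Γ̂(s) = ∫₀ˢ γ(t) dt. Then ΔR = 2ψ_{xy}² - 2ψ_{xx}ψ_{yy} everywhere on the domain. -/
open Set

noncomputable def px (f : ℝ × ℝ → ℝ) (p : ℝ × ℝ) : ℝ := deriv (fun t => f (t, p.2)) p.1

noncomputable def py (f : ℝ × ℝ → ℝ) (p : ℝ × ℝ) : ℝ := deriv (fun t => f (p.1, t)) p.2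

noncomputable def Rfun (ψ : ℝ × ℝ → ℝ) (γ : ℝ → ℝ) (g Q : ℝ) : ℝ × ℝ → ℝ :=
  fun p => ((px ψ p) ^ 2 + (py ψ p) ^ 2) / 2 + g * p.2 - Q / 2 + ∫ t in (0:ℝ)..(ψ p), γ t

/-
Along a horizontal or vertical line, `R` has the form `(u² + w²)/2 + (affine) + Γ̂(φ)` with
`(u, w) = ∇ψ` and `φ = ψ`, so two one-variable differentiations and the symmetry of third
derivatives give `ΔR = |∇²ψ|² + ∇ψ · ∇(Δψ) + γ'(ψ)|∇ψ|² + γ(ψ)Δψ`. Differentiating `Δψ = -γ(ψ)`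
cancels the two middle terms and `γ(ψ)Δψ = -(Δψ)²`, which leaves
`ψₓₓ² + 2ψₓᵧ² + ψᵧᵧ² - (ψₓₓ + ψᵧᵧ)² = 2ψₓᵧ² - 2ψₓₓψᵧᵧ`.
-/

section PartialDerivatives

variable {f : ℝ × ℝ → ℝ}

lemma hasDerivAt_px {x y : ℝ} (hf : DifferentiableAt ℝ f (x, y)) :
    HasDerivAt (fun t => f (t, y)) (px f (x, y)) x :=
  (hf.comp x ((hasDerivAt_id x).prodMk (hasDerivAt_const x y)).differentiableAt).hasDerivAt

lemma hasDerivAt_py {x y : ℝ} (hf : DifferentiableAt ℝ f (x, y)) :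
    HasDerivAt (fun t => f (x, t)) (py f (x, y)) y :=
  (hf.comp y ((hasDerivAt_const y x).prodMk (hasDerivAt_id y)).differentiableAt).hasDerivAt

lemma px_eq_fderiv {p : ℝ × ℝ} (hf : DifferentiableAt ℝ f p) : px f p = fderiv ℝ f p (1, 0) :=
  (hf.hasFDerivAt.comp_hasDerivAt p.1 ((hasDerivAt_id p.1).prodMk (hasDerivAt_const p.1 p.2))).deriv

lemma py_eq_fderiv {p : ℝ × ℝ} (hf : DifferentiableAt ℝ f p) : py f p = fderiv ℝ f p (0, 1) :=
  (hf.hasFDerivAt.comp_hasDerivAt p.2 ((hasDerivAt_const p.2 p.1).prodMk (hasDerivAt_id p.2))).deriv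

variable {m n : WithTop ℕ∞}

lemma contDiff_px (hf : ContDiff ℝ n f) (hmn : m + 1 ≤ n) : ContDiff ℝ m (px f) := by
  have hd : Differentiable ℝ f := (hf.of_le hmn).differentiable (by simp)
  rw [show px f = fun q => fderiv ℝ f q (1, 0) from funext fun q => px_eq_fderiv (hd q)]
  exact (hf.fderiv_right hmn).clm_apply contDiff_const

lemma contDiff_py (hf : ContDiff ℝ n f) (hmn : m + 1 ≤ n) : ContDiff ℝ m (py f) := by
  have hd : Differentiable ℝ f := (hf.of_le hmn).differentiable (by simp)
  rw [show py f = fun q => fderiv ℝ f q (0, 1) from funext fun q => py_eq_fderiv (hd q)]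
  exact (hf.fderiv_right hmn).clm_apply contDiff_const

lemma px_py_comm (hf : ContDiff ℝ 2 f) (p : ℝ × ℝ) : px (py f) p = py (px f) p := by
  have hd : Differentiable ℝ f := hf.differentiable two_ne_zero
  have hd' : Differentiable ℝ (fderiv ℝ f) := (hf.fderiv_right le_rfl).differentiable one_ne_zero
  have hdir (v : ℝ × ℝ) : Differentiable ℝ fun q => fderiv ℝ f q v :=
    fun q => (hd' q).clm_apply (differentiableAt_const v)
  have hsnd (v w : ℝ × ℝ) :
      fderiv ℝ (fun q => fderiv ℝ f q v) p w = fderiv ℝ (fderiv ℝ f) p w v := by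
    rw [fderiv_clm_apply (hd' p) (differentiableAt_const v)]
    simp
  rw [show py f = fun q => fderiv ℝ f q (0, 1) from funext fun q => py_eq_fderiv (hd q),
    show px f = fun q => fderiv ℝ f q (1, 0) from funext fun q => px_eq_fderiv (hd q),
    px_eq_fderiv (hdir _ p), py_eq_fderiv (hdir _ p), hsnd, hsnd]
  exact hf.contDiffAt.isSymmSndFDerivAt (by simp) _ _

lemma px_eq_of_eqOn {h : ℝ × ℝ → ℝ} {U : Set (ℝ × ℝ)} (hU : IsOpen U) (hfh : EqOn f h U)
    {p : ℝ × ℝ} (hp : p ∈ U) : px f p = px h p := by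
  have hline : {t : ℝ | (t, p.2) ∈ U} ∈ nhds p.1 :=
    (hU.preimage (continuous_id.prodMk continuous_const)).mem_nhds hp
  exact Filter.EventuallyEq.deriv_eq (Filter.mem_of_superset hline fun t ht => hfh ht)

lemma py_eq_of_eqOn {h : ℝ × ℝ → ℝ} {U : Set (ℝ × ℝ)} (hU : IsOpen U) (hfh : EqOn f h U)
    {p : ℝ × ℝ} (hp : p ∈ U) : py f p = py h p := by
  have hline : {t : ℝ | (p.1, t) ∈ U} ∈ nhds p.2 :=
    (hU.preimage (continuous_const.prodMk continuous_id)).mem_nhds hp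
  exact Filter.EventuallyEq.deriv_eq (Filter.mem_of_superset hline fun t ht => hfh ht)

end PartialDerivatives

lemma deriv_deriv_bernoulli {F u w φ u' w' φ' γ : ℝ → ℝ} {a b u'' w'' φ'' t : ℝ}
    (hγ : Continuous γ) (hγt : DifferentiableAt ℝ γ (φ t))
    (hF : ∀ s, F s = (u s ^ 2 + w s ^ 2) / 2 + (a * s + b) + ∫ τ in (0:ℝ)..φ s, γ τ)
    (hu : ∀ s, HasDerivAt u (u' s) s) (hw : ∀ s, HasDerivAt w (w' s) s)
    (hφ : ∀ s, HasDerivAt φ (φ' s) s)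
    (hu' : HasDerivAt u' u'' t) (hw' : HasDerivAt w' w'' t) (hφ' : HasDerivAt φ' φ'' t) :
    deriv (deriv F) t = u' t ^ 2 + u t * u'' + w' t ^ 2 + w t * w'' +
      deriv γ (φ t) * φ' t ^ 2 + γ (φ t) * φ'' := by
  have hF' (s : ℝ) : HasDerivAt F (u s * u' s + w s * w' s + a + γ (φ s) * φ' s) s := by
    have hΓ := (hγ.integral_hasStrictDerivAt 0 (φ s)).hasDerivAt.comp s (hφ s)
    refine ((((((hu s).pow 2).add ((hw s).pow 2)).div_const 2).add
      (((hasDerivAt_id s).const_mul a).add_const b)).add hΓ).congr_deriv ?_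
      |>.congr_of_eventuallyEq (.of_forall hF)
    simp only [Nat.cast_ofNat, Nat.add_one_sub_one, pow_one]
    ring
  rw [funext fun s => (hF' s).deriv]
  refine ((((hu t).mul hu').add ((hw t).mul hw')).add_const a |>.add
    ((hγt.hasDerivAt.comp t (hφ t)).mul hφ')).deriv.trans ?_
  simp only [Function.comp_apply]
  ring

section Bernoulli

variable {ψ : ℝ × ℝ → ℝ} {γ : ℝ → ℝ}

lemma px_px_Rfun (g Q : ℝ) (hψ : ContDiff ℝ 3 ψ) (hγ : ContDiff ℝ 1 γ) (p : ℝ × ℝ) :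
    px (px (Rfun ψ γ g Q)) p = px (px ψ) p ^ 2 + px ψ p * px (px (px ψ)) p +
      px (py ψ) p ^ 2 + py ψ p * px (px (py ψ)) p +
      deriv γ (ψ p) * px ψ p ^ 2 + γ (ψ p) * px (px ψ) p := by
  have hx : ContDiff ℝ 2 (px ψ) := contDiff_px hψ (by norm_num)
  have hy : ContDiff ℝ 2 (py ψ) := contDiff_py hψ (by norm_num)
  exact deriv_deriv_bernoulli (F := fun s => Rfun ψ γ g Q (s, p.2)) (a := 0) (b := g * p.2 - Q / 2)
    hγ.continuous (hγ.differentiable one_ne_zero _) (fun s => by simp only [Rfun]; ring)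
    (fun s => hasDerivAt_px (hx.differentiable two_ne_zero _))
    (fun s => hasDerivAt_px (hy.differentiable two_ne_zero _))
    (fun s => hasDerivAt_px (hψ.differentiable three_ne_zero _))
    (hasDerivAt_px ((contDiff_px hx le_rfl).differentiable one_ne_zero _))
    (hasDerivAt_px ((contDiff_px hy le_rfl).differentiable one_ne_zero _))
    (hasDerivAt_px (hx.differentiable two_ne_zero _))

lemma py_py_Rfun (g Q : ℝ) (hψ : ContDiff ℝ 3 ψ) (hγ : ContDiff ℝ 1 γ) (p : ℝ × ℝ) :
    py (py (Rfun ψ γ g Q)) p = py (px ψ) p ^ 2 + px ψ p * py (py (px ψ)) p +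
      py (py ψ) p ^ 2 + py ψ p * py (py (py ψ)) p +
      deriv γ (ψ p) * py ψ p ^ 2 + γ (ψ p) * py (py ψ) p := by
  have hx : ContDiff ℝ 2 (px ψ) := contDiff_px hψ (by norm_num)
  have hy : ContDiff ℝ 2 (py ψ) := contDiff_py hψ (by norm_num)
  exact deriv_deriv_bernoulli (F := fun s => Rfun ψ γ g Q (p.1, s)) (a := g) (b := -(Q / 2))
    hγ.continuous (hγ.differentiable one_ne_zero _) (fun s => by simp only [Rfun]; ring)
    (fun s => hasDerivAt_py (hx.differentiable two_ne_zero _))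
    (fun s => hasDerivAt_py (hy.differentiable two_ne_zero _))
    (fun s => hasDerivAt_py (hψ.differentiable three_ne_zero _))
    (hasDerivAt_py ((contDiff_py hx le_rfl).differentiable one_ne_zero _))
    (hasDerivAt_py ((contDiff_py hy le_rfl).differentiable one_ne_zero _))
    (hasDerivAt_py (hy.differentiable two_ne_zero _))

variable {U : Set (ℝ × ℝ)} {p : ℝ × ℝ}

lemma px_laplacian_eq (hU : IsOpen U) (hψ : ContDiff ℝ 3 ψ) (hγ : DifferentiableAt ℝ γ (ψ p))
    (hpde : ∀ q ∈ U, px (px ψ) q + py (py ψ) q = -γ (ψ q)) (hp : p ∈ U) :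
    px (px (px ψ)) p + px (py (py ψ)) p = -(deriv γ (ψ p) * px ψ p) := by
  have hxx : ContDiff ℝ 1 (px (px ψ)) := contDiff_px (contDiff_px hψ (m := 2) (by norm_num)) le_rfl
  have hyy : ContDiff ℝ 1 (py (py ψ)) := contDiff_py (contDiff_py hψ (m := 2) (by norm_num)) le_rfl
  calc px (px (px ψ)) p + px (py (py ψ)) p = px (fun q => px (px ψ) q + py (py ψ) q) p :=
        ((hasDerivAt_px (hxx.differentiable one_ne_zero _)).add
          (hasDerivAt_px (hyy.differentiable one_ne_zero _))).deriv.symm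
    _ = px (fun q => -γ (ψ q)) p := px_eq_of_eqOn hU hpde hp
    _ = -(deriv γ (ψ p) * px ψ p) :=
        (hγ.hasDerivAt.comp p.1 (hasDerivAt_px (hψ.differentiable three_ne_zero _))).neg.deriv

lemma py_laplacian_eq (hU : IsOpen U) (hψ : ContDiff ℝ 3 ψ) (hγ : DifferentiableAt ℝ γ (ψ p))
    (hpde : ∀ q ∈ U, px (px ψ) q + py (py ψ) q = -γ (ψ q)) (hp : p ∈ U) :
    py (px (px ψ)) p + py (py (py ψ)) p = -(deriv γ (ψ p) * py ψ p) := by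
  have hxx : ContDiff ℝ 1 (px (px ψ)) := contDiff_px (contDiff_px hψ (m := 2) (by norm_num)) le_rfl
  have hyy : ContDiff ℝ 1 (py (py ψ)) := contDiff_py (contDiff_py hψ (m := 2) (by norm_num)) le_rfl
  calc py (px (px ψ)) p + py (py (py ψ)) p = py (fun q => px (px ψ) q + py (py ψ) q) p :=
        ((hasDerivAt_py (hxx.differentiable one_ne_zero _)).add
          (hasDerivAt_py (hyy.differentiable one_ne_zero _))).deriv.symm
    _ = py (fun q => -γ (ψ q)) p := py_eq_of_eqOn hU hpde hp
    _ = -(deriv γ (ψ p) * py ψ p) :=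
        (hγ.hasDerivAt.comp p.2 (hasDerivAt_py (hψ.differentiable three_ne_zero _))).neg.deriv

end Bernoulli

theorem stmt1 (ψ : ℝ × ℝ → ℝ) (γ : ℝ → ℝ) (g Q : ℝ) (U : Set (ℝ × ℝ)) (hU : IsOpen U)
    (hψ : ContDiff ℝ 3 ψ) (hγ : ContDiff ℝ 1 γ)
    (hpde : ∀ p ∈ U, px (px ψ) p + py (py ψ) p = -γ (ψ p)) :
    ∀ p ∈ U,
      px (px (Rfun ψ γ g Q)) p + py (py (Rfun ψ γ g Q)) p =
        2 * (py (px ψ) p) ^ 2 - 2 * px (px ψ) p * py (py ψ) p := by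
  intro p hp
  have hx : ContDiff ℝ 2 (px ψ) := contDiff_px hψ (by norm_num)
  have hy : ContDiff ℝ 2 (py ψ) := contDiff_py hψ (by norm_num)
  have hxy : px (py ψ) = py (px ψ) := funext (px_py_comm (hψ.of_le (by norm_num)))
  have hxxy : px (px (py ψ)) p = py (px (px ψ)) p := by rw [hxy, px_py_comm hx]
  have hyyx : py (py (px ψ)) p = px (py (py ψ)) p := by rw [← hxy, px_py_comm hy]
  rw [px_px_Rfun g Q hψ hγ, py_py_Rfun g Q hψ hγ, hxxy, hyyx, hxy]
  have hγd := hγ.differentiable one_ne_zero (ψ p)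
  linear_combination px ψ p * px_laplacian_eq hU hψ hγd hpde hp +
    py ψ p * py_laplacian_eq hU hψ hγd hpde hp + (px (px ψ) p + py (py ψ) p) * hpde p hp
end

section
/- Let a, b, p, q, r be real numbers with b < 0 (think b = ψ_y(A), a = ψ_x(A), p = ψ_{xx}(A), q = ψ_{xy}(A), r = ψ_{yy}(A)). Suppose b·q = a·r, a·q < b·p, and q² ≤ p·r. Then p + r < 0. -/
/-!
Multiplying `a q < b p` by `b < 0` and using `b q = a r` gives `b² p < a² r`. If `r > 0`, then
`(b q)² ≤ b² p r < (a r)²`, contradicting `b q = a r`; hence `r ≤ 0`, so `b² p < 0` and `p < 0`.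
-/

section

variable {R : Type*} [CommRing R] [LinearOrder R] [IsStrictOrderedRing R] {a b p q r : R}

theorem sq_mul_lt_sq_mul_of_neg (hb : b < 0) (h1 : b * q = a * r) (h2 : a * q < b * p) :
    b ^ 2 * p < a ^ 2 * r :=
  calc b ^ 2 * p = b * (b * p) := by ring
    _ < b * (a * q) := mul_lt_mul_of_neg_left h2 hb
    _ = a * (b * q) := by ring
    _ = a ^ 2 * r := by rw [h1]; ring

theorem nonpos_of_sq_mul_lt_sq_mul (hlt : b ^ 2 * p < a ^ 2 * r) (h1 : b * q = a * r)
    (h3 : q ^ 2 ≤ p * r) : r ≤ 0 := by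
  by_contra! hr
  have : (b * q) ^ 2 < (a * r) ^ 2 :=
    calc (b * q) ^ 2 = b ^ 2 * q ^ 2 := by ring
      _ ≤ b ^ 2 * (p * r) := mul_le_mul_of_nonneg_left h3 (sq_nonneg b)
      _ = b ^ 2 * p * r := by ring
      _ < a ^ 2 * r * r := mul_lt_mul_of_pos_right hlt hr
      _ = (a * r) ^ 2 := by ring
  exact this.ne (by rw [h1])

end

theorem stmt2 (a b p q r : ℝ) (hb : b < 0)
    (h1 : b * q = a * r) (h2 : a * q < b * p) (h3 : q ^ 2 ≤ p * r) :
    p + r < 0 := by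
  have hlt := sq_mul_lt_sq_mul_of_neg hb h1 h2
  have hr : r ≤ 0 := nonpos_of_sq_mul_lt_sq_mul hlt h1 h3
  have hp : p < 0 :=
    neg_of_mul_neg_right (hlt.trans_le (mul_nonpos_of_nonneg_of_nonpos (sq_nonneg a) hr))
      (sq_nonneg b)
  linarith
end

section
/- Under the surface identity d/dx[½ψ_y(x,η(x))²] = R_x(x,η(x)), if additionally R(x,y) ≤ 0 for all (x,y) with y ≤ η(x), R(x,η(x)) = 0 for all x, and ψ_y(x,η(x)) < 0 for all x, then the function x ↦ ψ_y(x, η(x)) is monotone increasing on any interval where η is increasing, and monotone decreasing on any interval where η is decreasing. -/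
/-!
Along the horizontal line through a surface point `(x, η x)`, the function `t ↦ R (t, η x)`
vanishes at `t = x` and is `≤ 0` wherever `η t ≥ η x`, since `(t, η x)` then lies in the fluid
region. So if `η` increases near `x`, then `t = x` is a one-sided maximum from the right and
`R_x (x, η x) ≤ 0`; if `η` decreases, it is a maximum from the left and `R_x (x, η x) ≥ 0`.
By the surface identity this is the sign of `(½ ψ_y²)'` along the surface, and since `ψ_y < 0`
there, `½ ψ_y²` and `ψ_y` move in opposite directions.
-/

open Set

theorem py_eq_fderiv_apply {ψ : ℝ × ℝ → ℝ} (hψ : Differentiable ℝ ψ) (p : ℝ × ℝ) :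
    py ψ p = fderiv ℝ ψ p (0, 1) :=
  ((hψ p).hasFDerivAt.comp_hasDerivAt p.2
    ((hasDerivAt_const p.2 p.1).prodMk (hasDerivAt_id p.2))).deriv

theorem contDiff_py_s5 {ψ : ℝ × ℝ → ℝ} (hψ : ContDiff ℝ 2 ψ) : ContDiff ℝ 1 (py ψ) := by
  rw [funext (py_eq_fderiv_apply (hψ.differentiable two_ne_zero))]
  exact (hψ.fderiv_right (by norm_num)).clm_apply contDiff_const

theorem IsLocalMaxOn.deriv_nonpos_of_Ici {φ : ℝ → ℝ} {x : ℝ}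
    (h : IsLocalMaxOn φ (Ici x) x) : deriv φ x ≤ 0 := by
  by_cases hφ : DifferentiableAt ℝ φ x
  · simpa using h.hasFDerivWithinAt_nonpos hφ.hasFDerivAt.hasFDerivWithinAt (y := 1)
      (mem_posTangentConeAt_of_segment_subset
        ((segment_subset_Icc (by simp)).trans Icc_subset_Ici_self))
  · rw [deriv_zero_of_not_differentiableAt hφ]

theorem IsLocalMaxOn.deriv_nonneg_of_Iic {φ : ℝ → ℝ} {x : ℝ}
    (h : IsLocalMaxOn φ (Iic x) x) : 0 ≤ deriv φ x := by
  by_cases hφ : DifferentiableAt ℝ φ x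
  · simpa using h.hasFDerivWithinAt_nonpos hφ.hasFDerivAt.hasFDerivWithinAt (y := -1)
      (mem_posTangentConeAt_of_segment_subset
        ((segment_symm ℝ _ _).subset.trans
          ((segment_subset_Icc (by norm_num)).trans Icc_subset_Iic_self)))
  · rw [deriv_zero_of_not_differentiableAt hφ]

section Surface

variable {R : ℝ × ℝ → ℝ} {η : ℝ → ℝ} {a b x : ℝ}

theorem px_nonpos_of_monotoneOn (hR : ∀ p : ℝ × ℝ, 0 ≤ p.2 → p.2 ≤ η p.1 → R p ≤ 0)
    (hsurf : R (x, η x) = 0) (hx0 : 0 ≤ η x) (hη : MonotoneOn η (Icc a b))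
    (hx : x ∈ Ioo a b) : px R (x, η x) ≤ 0 := by
  refine IsLocalMaxOn.deriv_nonpos_of_Ici (φ := fun t => R (t, η x)) ?_
  filter_upwards [Ico_mem_nhdsGE hx.2] with t ht
  rw [hsurf]
  exact hR (t, η x) hx0 (hη ⟨hx.1.le, hx.2.le⟩ ⟨hx.1.le.trans ht.1, ht.2.le⟩ ht.1)

theorem px_nonneg_of_antitoneOn (hR : ∀ p : ℝ × ℝ, 0 ≤ p.2 → p.2 ≤ η p.1 → R p ≤ 0)
    (hsurf : R (x, η x) = 0) (hx0 : 0 ≤ η x) (hη : AntitoneOn η (Icc a b))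
    (hx : x ∈ Ioo a b) : 0 ≤ px R (x, η x) := by
  refine IsLocalMaxOn.deriv_nonneg_of_Iic (φ := fun t => R (t, η x)) ?_
  filter_upwards [Ioc_mem_nhdsLE hx.1] with t ht
  rw [hsurf]
  exact hR (t, η x) hx0 (hη ⟨ht.1.le, ht.2.trans hx.2.le⟩ ⟨hx.1.le, hx.2.le⟩ ht.2)

end Surface

section NegativeFunction

variable {f : ℝ → ℝ} {a b : ℝ}

theorem monotoneOn_of_neg_of_deriv_half_sq_nonpos (hf : Differentiable ℝ f)
    (hneg : ∀ x ∈ Icc a b, f x < 0)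
    (hd : ∀ x ∈ Ioo a b, deriv (fun t => f t ^ 2 / 2) x ≤ 0) : MonotoneOn f (Icc a b) := by
  have hdsq : Differentiable ℝ (fun t => f t ^ 2 / 2) := (hf.pow 2).div_const 2
  have hsq : AntitoneOn (fun t => f t ^ 2 / 2) (Icc a b) :=
    antitoneOn_of_deriv_nonpos (convex_Icc a b) hdsq.continuous.continuousOn
      hdsq.differentiableOn (by simpa only [interior_Icc] using hd)
  intro x hx y hy hxy
  nlinarith [hsq hx hy hxy, hneg x hx, hneg y hy]

theorem antitoneOn_of_neg_of_deriv_half_sq_nonneg (hf : Differentiable ℝ f)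
    (hneg : ∀ x ∈ Icc a b, f x < 0)
    (hd : ∀ x ∈ Ioo a b, 0 ≤ deriv (fun t => f t ^ 2 / 2) x) : AntitoneOn f (Icc a b) := by
  have hdsq : Differentiable ℝ (fun t => f t ^ 2 / 2) := (hf.pow 2).div_const 2
  have hsq : MonotoneOn (fun t => f t ^ 2 / 2) (Icc a b) :=
    monotoneOn_of_deriv_nonneg (convex_Icc a b) hdsq.continuous.continuousOn
      hdsq.differentiableOn (by simpa only [interior_Icc] using hd)
  intro x hx y hy hxy
  nlinarith [hsq hx hy hxy, hneg x hx, hneg y hy]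

end NegativeFunction

theorem stmt5_general (ψ : ℝ × ℝ → ℝ) (γ : ℝ → ℝ) (g Q : ℝ) (η : ℝ → ℝ)
    (hη : ContDiff ℝ 1 η) (hψ : ContDiff ℝ 2 ψ)
    (hηpos : ∀ x : ℝ, 0 < η x)
    (hident : ∀ x : ℝ,
      deriv (fun t => (py ψ (t, η t)) ^ 2 / 2) x = px (Rfun ψ γ g Q) (x, η x))
    (hRle : ∀ p : ℝ × ℝ, 0 ≤ p.2 → p.2 ≤ η p.1 → Rfun ψ γ g Q p ≤ 0)
    (hRsurf : ∀ x : ℝ, Rfun ψ γ g Q (x, η x) = 0)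
    (hψy : ∀ x : ℝ, py ψ (x, η x) < 0) :
    (∀ a b : ℝ, MonotoneOn η (Set.Icc a b) →
        MonotoneOn (fun x => py ψ (x, η x)) (Set.Icc a b)) ∧
    (∀ a b : ℝ, AntitoneOn η (Set.Icc a b) →
        AntitoneOn (fun x => py ψ (x, η x)) (Set.Icc a b)) := by
  have hdiff : Differentiable ℝ (fun x => py ψ (x, η x)) :=
    ((contDiff_py_s5 hψ).comp (contDiff_id.prodMk hη)).differentiable one_ne_zero
  refine ⟨fun a b hmono => ?_, fun a b hanti => ?_⟩
  · refine monotoneOn_of_neg_of_deriv_half_sq_nonpos hdiff (fun x _ => hψy x) fun x hx => ?_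
    rw [hident x]
    exact px_nonpos_of_monotoneOn hRle (hRsurf x) (hηpos x).le hmono hx
  · refine antitoneOn_of_neg_of_deriv_half_sq_nonneg hdiff (fun x _ => hψy x) fun x hx => ?_
    rw [hident x]
    exact px_nonneg_of_antitoneOn hRle (hRsurf x) (hηpos x).le hanti hx

theorem stmt5 (ψ : ℝ × ℝ → ℝ) (γ : ℝ → ℝ) (g Q : ℝ) (η : ℝ → ℝ)
    (hη : ContDiff ℝ 1 η) (hψ : ContDiff ℝ 2 ψ) (hγ : ContDiff ℝ 1 γ)
    (hηpos : ∀ x : ℝ, 0 < η x)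
    (hident : ∀ x : ℝ,
      deriv (fun t => (py ψ (t, η t)) ^ 2 / 2) x = px (Rfun ψ γ g Q) (x, η x))
    (hRle : ∀ p : ℝ × ℝ, 0 ≤ p.2 → p.2 ≤ η p.1 → Rfun ψ γ g Q p ≤ 0)
    (hRsurf : ∀ x : ℝ, Rfun ψ γ g Q (x, η x) = 0)
    (hψy : ∀ x : ℝ, py ψ (x, η x) < 0) :
    (∀ a b : ℝ, MonotoneOn η (Set.Icc a b) →
        MonotoneOn (fun x => py ψ (x, η x)) (Set.Icc a b)) ∧
    (∀ a b : ℝ, AntitoneOn η (Set.Icc a b) →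
        AntitoneOn (fun x => py ψ (x, η x)) (Set.Icc a b)) :=
  stmt5_general ψ γ g Q η hη hψ hηpos hident hRle hRsurf hψy
end
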